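/- Let p_t be the lognormal density of exponential Brownian motion, a(t) = ψ^{-1}(Kψ(t)) with K ∈ (0,1), and c ∈ (0,K). Define h_t(x) = (1/(1−c))(p_t(x) − c p_{a(t)}(x)) for x > 0. Then for each t > 0, h_t is nonnegative on (0,∞), integrates to 1, and satisfies ∫₀^∞ x h_t(x) dx = 1. -/

import Mathlib

/-!
Under `x = exp y`, `x ^ r p_t(x) dx` becomes `exp (t r (r - 1) / 2)` times the Gaussian density
with mean `(r - 1/2) t` and variance `t`; for `r = 0, 1` this gives mass and mean `1`.
Since `ψ` is increasing and `ψ (a t) = K ψ t < ψ t`, we have `a t ≤ t`, so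
`p_t ≥ K p_{a t} ≥ c p_{a t}` pointwise.
-/

open Real MeasureTheory

/-- The lognormal density of exponential Brownian motion at time `t`. -/
noncomputable def ebmDensity (t x : ℝ) : ℝ :=
  (1 / Real.sqrt (2 * Real.pi)) * (Real.exp (-t / 8) / Real.sqrt t) *
    (Real.exp (-(Real.log x) ^ 2 / (2 * t)) / x ^ ((3 : ℝ) / 2))

/-- The normalizing function `ψ(t) = √t e^{t/8}`. -/
noncomputable def psi (t : ℝ) : ℝ := Real.sqrt t * Real.exp (t / 8)

open ProbabilityTheory Set

section ExpSubstitution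

variable {E : Type*} [NormedAddCommGroup E] [NormedSpace ℝ E]

theorem integral_Ioi_zero_eq_integral_exp_smul (g : ℝ → E) :
    ∫ x in Ioi 0, g x = ∫ y, exp y • g (exp y) := by
  rw [← range_exp, ← image_univ]
  simpa [abs_of_pos (exp_pos _)] using integral_image_eq_integral_abs_deriv_smul
    MeasurableSet.univ (fun y _ ↦ (hasDerivAt_exp y).hasDerivWithinAt) exp_injective.injOn g

theorem integrableOn_Ioi_zero_iff_integrable_exp_smul (g : ℝ → E) :
    IntegrableOn g (Ioi 0) ↔ Integrable fun y ↦ exp y • g (exp y) := by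
  rw [← range_exp, ← image_univ]
  simpa [abs_of_pos (exp_pos _)] using integrableOn_image_iff_integrableOn_abs_deriv_smul
    MeasurableSet.univ (fun y _ ↦ (hasDerivAt_exp y).hasDerivWithinAt) exp_injective.injOn g

end ExpSubstitution

theorem exp_mul_rpow_mul_ebmDensity_exp {t : ℝ} (ht : 0 < t) (r y : ℝ) :
    exp y * (exp y ^ r * ebmDensity t (exp y)) =
      exp (t * r * (r - 1) / 2) * gaussianPDFReal ((r - 1 / 2) * t) t.toNNReal y := by
  have hexp : exp y * exp (y * r) * exp (-t / 8) * exp (-y ^ 2 / (2 * t)) / exp (y * (3 / 2)) =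
      exp (t * r * (r - 1) / 2) * exp (-(y - (r - 1 / 2) * t) ^ 2 / (2 * t)) := by
    rw [← exp_add, ← exp_add, ← exp_add, ← exp_sub, ← exp_add]
    congr 1
    field_simp
    ring
  rw [gaussianPDFReal, Real.coe_toNNReal t ht.le, ebmDensity, ← exp_mul, ← exp_mul, log_exp,
    sqrt_mul (by positivity) t]
  calc _ = (√(2 * π) * √t)⁻¹ *
        (exp y * exp (y * r) * exp (-t / 8) * exp (-y ^ 2 / (2 * t)) / exp (y * (3 / 2))) := by
        ring
    _ = _ := by rw [hexp]; ring

theorem integrableOn_rpow_mul_ebmDensity {t : ℝ} (ht : 0 < t) (r : ℝ) :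
    IntegrableOn (fun x ↦ x ^ r * ebmDensity t x) (Ioi 0) := by
  simp only [integrableOn_Ioi_zero_iff_integrable_exp_smul, smul_eq_mul,
    exp_mul_rpow_mul_ebmDensity_exp ht]
  exact (integrable_gaussianPDFReal _ _).const_mul _

theorem integral_rpow_mul_ebmDensity {t : ℝ} (ht : 0 < t) (r : ℝ) :
    ∫ x in Ioi 0, x ^ r * ebmDensity t x = exp (t * r * (r - 1) / 2) := by
  simp only [integral_Ioi_zero_eq_integral_exp_smul, smul_eq_mul,
    exp_mul_rpow_mul_ebmDensity_exp ht, integral_const_mul]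
  rw [integral_gaussianPDFReal_eq_one _ (Real.toNNReal_pos.2 ht).ne', mul_one]

theorem integrableOn_ebmDensity {t : ℝ} (ht : 0 < t) :
    IntegrableOn (ebmDensity t) (Ioi 0) := by
  simpa using integrableOn_rpow_mul_ebmDensity ht 0

theorem integral_ebmDensity {t : ℝ} (ht : 0 < t) : ∫ x in Ioi 0, ebmDensity t x = 1 := by
  simpa using integral_rpow_mul_ebmDensity ht 0

theorem integrableOn_mul_ebmDensity {t : ℝ} (ht : 0 < t) :
    IntegrableOn (fun x ↦ x * ebmDensity t x) (Ioi 0) := by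
  simpa using integrableOn_rpow_mul_ebmDensity ht 1

theorem integral_mul_ebmDensity {t : ℝ} (ht : 0 < t) :
    ∫ x in Ioi 0, x * ebmDensity t x = 1 := by
  simpa using integral_rpow_mul_ebmDensity ht 1

theorem psi_pos {t : ℝ} (ht : 0 < t) : 0 < psi t := by
  unfold psi
  positivity

theorem psi_strictMonoOn : StrictMonoOn psi (Ici 0) := fun s hs t _ hst ↦
  mul_lt_mul (sqrt_lt_sqrt hs hst) (exp_le_exp.2 (by linarith)) (exp_pos _) (sqrt_nonneg _)

theorem ebmDensity_eq_div_psi (t x : ℝ) :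
    ebmDensity t x =
      (√(2 * π))⁻¹ * (exp (-log x ^ 2 / (2 * t)) / x ^ ((3 : ℝ) / 2)) / psi t := by
  rw [ebmDensity, psi, neg_div, exp_neg]
  field_simp

theorem ebmDensity_nonneg (t : ℝ) {x : ℝ} (hx : 0 ≤ x) : 0 ≤ ebmDensity t x := by
  unfold ebmDensity
  positivity

/-- The ratio `p_t / p_s` is `(ψ s / ψ t) · exp ((log x)² (1/s - 1/t) / 2)`, which is at least
`ψ s / ψ t` as soon as `s ≤ t`. -/
theorem mul_ebmDensity_le_of_psi_eq {s t K x : ℝ} (hs : 0 < s) (ht : 0 < t) (hK : K ≤ 1)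
    (h : psi s = K * psi t) (hx : 0 ≤ x) : K * ebmDensity s x ≤ ebmDensity t x := by
  have hK0 : 0 < K := pos_of_mul_pos_left (h ▸ psi_pos hs) (psi_pos ht).le
  have hst : s ≤ t := by
    rw [← psi_strictMonoOn.le_iff_le hs.le ht.le, h]
    exact mul_le_of_le_one_left (psi_pos ht).le hK
  have hgauss : exp (-log x ^ 2 / (2 * s)) ≤ exp (-log x ^ 2 / (2 * t)) := by
    rw [exp_le_exp, neg_div, neg_div, neg_le_neg_iff]
    gcongr
  rw [ebmDensity_eq_div_psi, ebmDensity_eq_div_psi, h, ← mul_div_assoc,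
    mul_div_mul_left _ _ hK0.ne']
  gcongr
  exact (psi_pos ht).le

theorem integral_one_div_one_sub_mul_sub_eq_one {α : Type*} [MeasurableSpace α] {μ : Measure α}
    {f g : α → ℝ} {c : ℝ} (hf : Integrable f μ) (hg : Integrable g μ)
    (hf1 : ∫ x, f x ∂μ = 1) (hg1 : ∫ x, g x ∂μ = 1) (hc : c ≠ 1) :
    ∫ x, 1 / (1 - c) * (f x - c * g x) ∂μ = 1 := by
  rw [integral_const_mul, integral_sub hf (hg.const_mul c), integral_const_mul, hf1, hg1,
    mul_one, one_div_mul_cancel (sub_ne_zero.2 hc.symm)]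

theorem fakeEBM_mixture_density {c K : ℝ} (hcK : c < K) (hK : K < 1)
    (a : ℝ → ℝ) (ha_pos : ∀ t > 0, 0 < a t)
    (ha : ∀ t > 0, psi (a t) = K * psi t) :
    ∀ t > (0 : ℝ),
      (∀ x > (0 : ℝ),
        0 ≤ (1 / (1 - c)) * (ebmDensity t x - c * ebmDensity (a t) x)) ∧
      (∫ x in Set.Ioi (0 : ℝ),
        (1 / (1 - c)) * (ebmDensity t x - c * ebmDensity (a t) x)) = 1 ∧
      (∫ x in Set.Ioi (0 : ℝ),
        x * ((1 / (1 - c)) * (ebmDensity t x - c * ebmDensity (a t) x))) = 1 := by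
  intro t ht
  have hat : 0 < a t := ha_pos t ht
  have hc1 : c < 1 := hcK.trans hK
  refine ⟨fun x hx ↦ ?_, ?_, ?_⟩
  · have hcK_le : c * ebmDensity (a t) x ≤ K * ebmDensity (a t) x :=
      mul_le_mul_of_nonneg_right hcK.le (ebmDensity_nonneg _ hx.le)
    have hK_le : K * ebmDensity (a t) x ≤ ebmDensity t x :=
      mul_ebmDensity_le_of_psi_eq hat ht hK.le (ha t ht) hx.le
    exact mul_nonneg (one_div_nonneg.2 (sub_nonneg.2 hc1.le))
      (sub_nonneg.2 (hcK_le.trans hK_le))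
  · exact integral_one_div_one_sub_mul_sub_eq_one (integrableOn_ebmDensity ht)
      (integrableOn_ebmDensity hat) (integral_ebmDensity ht) (integral_ebmDensity hat) hc1.ne
  · have hdistrib : ∀ x : ℝ, x * (1 / (1 - c) * (ebmDensity t x - c * ebmDensity (a t) x)) =
        1 / (1 - c) * (x * ebmDensity t x - c * (x * ebmDensity (a t) x)) := fun x ↦ by ring
    simp_rw [hdistrib]
    exact integral_one_div_one_sub_mul_sub_eq_one (integrableOn_mul_ebmDensity ht)
      (integrableOn_mul_ebmDensity hat) (integral_mul_ebmDensity ht) (integral_mul_ebmDensity hat)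
      hc1.ne
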